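/- For a weak composition a of length n, the monomial slide polynomial 𝔐_a lies in the ring of quasisymmetric polynomials QSym_n if and only if a has the form 0^k α, a strong composition α of length n−k preceded by k zeros; moreover 𝔐_{0^k α} = M_α(x_1,…,x_n), the monomial quasisymmetric polynomial. Hence the monomial slide basis lifts the monomial quasisymmetric basis of QSym_n. -/

import Mathlib

/-!
The coefficient of `x^b` in `𝔐_a` is `1` exactly when `b ≥ a` and `b⁺ = a⁺`, while a
quasisymmetric polynomial has equal coefficients at any two `b` with the same positive part.
Among the weak compositions `b` of length `n` with `b⁺ = α`, the word `0^k α` is least and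
`α 0^k` greatest in dominance order. Hence `𝔐_{0^k α}` contains every such `x^b`, i.e. it is
`M_α`. Conversely, if `𝔐_a` is quasisymmetric and `α = a⁺`, its coefficient at `α 0^k` is `1`,
hence so is its coefficient at `0^k α`, which gives `0^k α ≥ a ≥ 0^k α`.
-/

open MvPolynomial

/-- The monomial `x^b` in `n` variables, for a weak composition recorded as a list. -/
noncomputable def xlist (n : ℕ) (b : List ℕ) : MvPolynomial (Fin n) ℤ :=
  ∏ i : Fin n, X i ^ b.getD (i : ℕ) 0

/-- Dominance order: every partial sum of `b` is at least that of `a`. -/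
def DomL (b a : List ℕ) : Prop := ∀ k, (a.take k).sum ≤ (b.take k).sum

/-- The positive part of a weak composition: delete all zero entries. -/
def posL (b : List ℕ) : List ℕ := b.filter (fun x => x ≠ 0)

/-- The monomial slide polynomial `𝔐_a` of a weak composition `a` of length `n`:
the sum of `x^b` over weak compositions `b` of length `n` with `b ≥ a` in dominance
order and `b⁺ = a⁺`. -/
noncomputable def MSlide (n : ℕ) (a : List ℕ) : MvPolynomial (Fin n) ℤ :=
  ∑ᶠ (b : List ℕ) (_ : b.length = n ∧ DomL b a ∧ posL b = posL a), xlist n b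

/-- The monomial quasisymmetric polynomial `M_α(x_1, …, x_n)`. -/
noncomputable def Mq (n : ℕ) (α : List ℕ) : MvPolynomial (Fin n) ℤ :=
  ∑ᶠ (b : List ℕ) (_ : b.length = n ∧ posL b = α), xlist n b

/-- The ring (here: ℤ-submodule) `QSym_n` of quasisymmetric polynomials in
`x_1, …, x_n`: the span of the monomial quasisymmetric polynomials. -/
noncomputable def QSymn (n : ℕ) : Submodule ℤ (MvPolynomial (Fin n) ℤ) :=
  Submodule.span ℤ {f | ∃ α : List ℕ, (∀ x ∈ α, 0 < x) ∧ f = Mq n α}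

noncomputable def expVec (n : ℕ) (b : List ℕ) : Fin n →₀ ℕ :=
  Finsupp.equivFunOnFinite.symm fun i => b.getD i 0

lemma xlist_eq_monomial (n : ℕ) (b : List ℕ) : xlist n b = monomial (expVec n b) 1 := by
  rw [xlist, monomial_eq, C_1, one_mul, Finsupp.prod_pow]
  simp [expVec]

lemma expVec_injOn (n : ℕ) : Set.InjOn (expVec n) {b | b.length = n} := by
  intro b hb c hc h
  apply List.ext_getElem (hb.trans hc.symm)
  intro i hib hic
  have hi := DFunLike.congr_fun h ⟨i, hb ▸ hib⟩
  simp only [expVec, Finsupp.coe_equivFunOnFinite_symm] at hi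
  rwa [List.getD_eq_getElem _ _ hib, List.getD_eq_getElem _ _ hic] at hi

lemma List.IsPrefix.nat_sum_le {l₁ l₂ : List ℕ} (h : l₁ <+: l₂) : l₁.sum ≤ l₂.sum :=
  h.sublist.sum_le_sum fun _ _ => Nat.zero_le _

lemma sum_posL (l : List ℕ) : (posL l).sum = l.sum := by
  induction l with
  | nil => rfl
  | cons x t ih => by_cases hx : x = 0 <;> simp_all [posL]

lemma length_posL_add_count_zero (l : List ℕ) : (posL l).length + l.count 0 = l.length := by
  induction l with
  | nil => rfl
  | cons x t ih =>
    by_cases hx : x = 0 <;> simp [posL, hx] at ih ⊢ <;> omega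

lemma posL_append (l m : List ℕ) : posL (l ++ m) = posL l ++ posL m :=
  List.filter_append ..

lemma posL_replicate_zero (k : ℕ) : posL (List.replicate k 0) = [] := by
  simp [posL]

lemma posL_of_forall_pos {α : List ℕ} (hα : ∀ x ∈ α, 0 < x) : posL α = α :=
  List.filter_eq_self.2 fun x hx => by simpa using (hα x hx).ne'

lemma pos_of_mem_posL {l : List ℕ} : ∀ x ∈ posL l, 0 < x := fun _ hx =>
  Nat.pos_of_ne_zero (by simpa using List.of_mem_filter hx)

lemma posL_take_prefix (l : List ℕ) (m : ℕ) : posL (l.take m) <+: posL l :=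
  (List.take_prefix m l).filter _

lemma sum_take_le_sum_take_posL (l : List ℕ) (m : ℕ) :
    (l.take m).sum ≤ ((posL l).take m).sum := by
  rw [← sum_posL (l.take m)]
  refine (List.prefix_of_prefix_length_le (posL_take_prefix l m) (List.take_prefix m _)
    ?_).nat_sum_le
  have h₁ := (posL_take_prefix l m).length_le
  have h₂ : (posL (l.take m)).length ≤ m :=
    (List.length_filter_le _ _).trans (List.length_take_le _ _)
  rw [List.length_take]
  omega

lemma sum_take_posL_le_sum_take (l : List ℕ) (m : ℕ) :
    ((posL l).take (m - l.count 0)).sum ≤ (l.take m).sum := by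
  rw [← sum_posL (l.take m)]
  refine (List.prefix_of_prefix_length_le (List.take_prefix _ _) (posL_take_prefix l m)
    ?_).nat_sum_le
  have h₁ := length_posL_add_count_zero l
  have h₂ := length_posL_add_count_zero (l.take m)
  have h₃ : (l.take m).count 0 ≤ l.count 0 := (List.take_sublist m l).count_le 0
  rw [List.length_take] at h₂ ⊢
  omega

lemma finite_setOf_posL_eq (n : ℕ) (α : List ℕ) :
    {b : List ℕ | b.length = n ∧ posL b = α}.Finite := by
  refine ((List.finite_length_eq (Fin (α.sum + 1)) n).image (List.map Fin.val)).subset ?_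
  rintro b ⟨hlen, hpos⟩
  have hle : ∀ x ∈ b, x < α.sum + 1 := fun x hx =>
    Nat.lt_succ_of_le (hpos ▸ sum_posL b ▸ List.le_sum_of_mem hx)
  exact ⟨b.pmap (fun x hx => ⟨x, hx⟩) hle, by simpa using hlen, by simp [List.map_pmap]⟩

lemma domL_replicate_zero_append {b α : List ℕ} {k : ℕ} (hlen : b.length = k + α.length)
    (hb : posL b = α) : DomL b (List.replicate k 0 ++ α) := by
  intro m
  have hk : b.count 0 = k := by
    have := length_posL_add_count_zero b
    rw [hb] at this
    omega
  simpa [hb, hk, List.take_append] using sum_take_posL_le_sum_take b m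

lemma domL_posL_append_replicate_zero (a : List ℕ) (j : ℕ) :
    DomL (posL a ++ List.replicate j 0) a := fun m => by
  simpa [List.take_append] using sum_take_le_sum_take_posL a m

lemma DomL.antisymm {a b : List ℕ} (hl : a.length = b.length) (hab : DomL a b)
    (hba : DomL b a) : a = b := by
  refine List.ext_getElem hl fun i hia hib => ?_
  have := List.sum_take_succ a i hia
  have := List.sum_take_succ b i hib
  have := hab i
  have := hab (i + 1)
  have := hba i
  have := hba (i + 1)
  omega

open scoped Classical in
lemma coeff_expVec_finsum_xlist {n : ℕ} {S : Set (List ℕ)} (hS : S.Finite)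
    (hlen : ∀ b ∈ S, b.length = n) {c : List ℕ} (hc : c.length = n) :
    coeff (expVec n c) (∑ᶠ b ∈ S, xlist n b) = if c ∈ S then 1 else 0 := by
  rw [finsum_mem_eq_finite_toFinset_sum _ hS, coeff_sum]
  have hcoeff : ∀ b ∈ hS.toFinset, coeff (expVec n c) (xlist n b) = if b = c then 1 else 0 :=
    fun b hb => by
      simp only [xlist_eq_monomial, coeff_monomial,
        (expVec_injOn n).eq_iff (hlen b (hS.mem_toFinset.1 hb)) hc]
  rw [Finset.sum_congr rfl hcoeff, Finset.sum_ite_eq']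
  simp

open scoped Classical in
lemma coeff_expVec_Mq {n : ℕ} (α : List ℕ) {b : List ℕ} (hb : b.length = n) :
    coeff (expVec n b) (Mq n α) = if posL b = α then 1 else 0 :=
  (coeff_expVec_finsum_xlist (finite_setOf_posL_eq n α) (fun c hc => hc.1) hb).trans
    (by simp [hb])

open scoped Classical in
lemma coeff_expVec_MSlide {n : ℕ} (a : List ℕ) {b : List ℕ} (hb : b.length = n) :
    coeff (expVec n b) (MSlide n a) = if DomL b a ∧ posL b = posL a then 1 else 0 := by
  have hS : {c : List ℕ | c.length = n ∧ DomL c a ∧ posL c = posL a}.Finite :=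
    (finite_setOf_posL_eq n (posL a)).subset fun c hc => ⟨hc.1, hc.2.2⟩
  exact (coeff_expVec_finsum_xlist hS (fun c hc => hc.1) hb).trans (by simp [hb])

lemma coeff_expVec_eq_of_mem_QSymn {n : ℕ} {f : MvPolynomial (Fin n) ℤ} (hf : f ∈ QSymn n)
    {b c : List ℕ} (hb : b.length = n) (hc : c.length = n) (hbc : posL b = posL c) :
    coeff (expVec n b) f = coeff (expVec n c) f := by
  induction hf using Submodule.span_induction with
  | mem g hg =>
    obtain ⟨α, -, rfl⟩ := hg
    rw [coeff_expVec_Mq α hb, coeff_expVec_Mq α hc, hbc]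
  | zero => simp
  | add x y _ _ hx hy => simp only [coeff_add, hx, hy]
  | smul r x _ hx => simp only [coeff_smul, hx]

lemma MSlide_replicate_zero_append {n k : ℕ} {α : List ℕ} (hα : ∀ x ∈ α, 0 < x)
    (hk : k + α.length = n) : MSlide n (List.replicate k 0 ++ α) = Mq n α := by
  have hpos : posL (List.replicate k 0 ++ α) = α := by
    rw [posL_append, posL_replicate_zero, posL_of_forall_pos hα, List.nil_append]
  have hiff : ∀ b : List ℕ, (b.length = n ∧ DomL b (List.replicate k 0 ++ α) ∧
      posL b = posL (List.replicate k 0 ++ α)) ↔ (b.length = n ∧ posL b = α) := fun b => by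
    rw [hpos]
    exact ⟨fun h => ⟨h.1, h.2.2⟩,
      fun h => ⟨h.1, domL_replicate_zero_append (h.1.trans hk.symm) h.2, h.2⟩⟩
  simp only [MSlide, Mq, hiff]

lemma eq_replicate_zero_append_posL_of_MSlide_mem {n : ℕ} {a : List ℕ} (ha : a.length = n)
    (hq : MSlide n a ∈ QSymn n) : a = List.replicate (n - (posL a).length) 0 ++ posL a := by
  have hcount := length_posL_add_count_zero a
  have hα : posL (posL a) = posL a := posL_of_forall_pos pos_of_mem_posL
  set α := posL a
  set k := n - α.length
  have hk : k + α.length = n := by omega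
  have hmax : coeff (expVec n (α ++ List.replicate k 0)) (MSlide n a) = 1 := by
    rw [coeff_expVec_MSlide a (by simp; omega), if_pos]
    exact ⟨domL_posL_append_replicate_zero a k,
      by rw [posL_append, posL_replicate_zero, hα, List.append_nil]⟩
  have hmin : coeff (expVec n (List.replicate k 0 ++ α)) (MSlide n a) = 1 := by
    rwa [coeff_expVec_eq_of_mem_QSymn hq (c := α ++ List.replicate k 0) (by simp; omega)
      (by simp; omega) (by simp [posL_append, posL_replicate_zero])]
  have hdom : DomL (List.replicate k 0 ++ α) a := by
    by_contra h
    rw [coeff_expVec_MSlide a (by simp; omega), if_neg fun h' => h h'.1] at hmin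
    exact zero_ne_one hmin
  exact DomL.antisymm (by simp; omega) (domL_replicate_zero_append (by omega) rfl) hdom

/-- For a weak composition `a` of length `n`, the monomial slide polynomial `𝔐_a` is
quasisymmetric if and only if `a = 0^k α` for a strong composition `α` of length `n - k`;
moreover `𝔐_{0^k α} = M_α(x_1, …, x_n)`.  Hence the monomial slide basis lifts the
monomial quasisymmetric basis of `QSym_n`. -/
theorem mslide_lifts_monomial (n : ℕ) (a : List ℕ) (ha : a.length = n) :
    (MSlide n a ∈ QSymn n ↔
      ∃ (k : ℕ) (α : List ℕ), (∀ x ∈ α, 0 < x) ∧ k + α.length = n ∧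
        a = List.replicate k 0 ++ α) ∧
    (∀ (k : ℕ) (α : List ℕ), (∀ x ∈ α, 0 < x) → k + α.length = n →
      a = List.replicate k 0 ++ α → MSlide n a = Mq n α) := by
  have hslide : ∀ (k : ℕ) (α : List ℕ), (∀ x ∈ α, 0 < x) → k + α.length = n →
      a = List.replicate k 0 ++ α → MSlide n a = Mq n α := by
    rintro k α hα hk rfl
    exact MSlide_replicate_zero_append hα hk
  refine ⟨⟨fun hq => ?_, fun ⟨k, α, hα, hk, h⟩ => ?_⟩, hslide⟩
  · have hcount := length_posL_add_count_zero a
    exact ⟨_, posL a, pos_of_mem_posL, by omega,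
      eq_replicate_zero_append_posL_of_MSlide_mem ha hq⟩
  · rw [hslide k α hα hk h]
    exact Submodule.subset_span ⟨α, hα, rfl⟩
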